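/- arXiv:2308.15461 — 3 statements merged into one kernel-verified Lean document; each statement's English description precedes it below -/
import Mathlib

section
/- Let U, V be m×n real matrices, D an n×n real diagonal matrix, and let ‖·‖ be any unitarily invariant matrix norm. Then ‖U D Vᵀ‖ ≤ (1/2)·(‖|D|^{1/2} Uᵀ U |D|^{1/2}‖ + ‖|D|^{1/2} Vᵀ V |D|^{1/2}‖), where |D| denotes the entrywise absolute value of D (equivalently (DᵀD)^{1/2}), and norms of matrices of differing sizes are interpreted via zero-padding dilation. -/
/-! Singular value decompositions reduce everything to diagonal matrices. An orthogonally
invariant seminorm `p` does not increase under pinching, since the diagonal part of `A` is the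
average of its conjugates by all sign diagonals, and it is monotone on diagonal matrices, since a
diagonal contraction is a convex combination of sign diagonals. If `Qᵀ (Xᵀ Y) W = diag σ` with
`Q`, `W` orthogonal, then `A = X Q` and `B = Y W` satisfy `|σᵢ| ≤ ((AᵀA)ᵢᵢ + (BᵀB)ᵢᵢ) / 2` by
AM-GM on columns, so monotonicity, pinching and invariance give
`p (Xᵀ Y) ≤ (p (Xᵀ X) + p (Yᵀ Y)) / 2`; as `X Xᵀ` and `Xᵀ X` are orthogonally similar, the same
bound holds for `p (X Yᵀ)`. For `U D Vᵀ` take `X = U |D|^{1/2}` and `Y = V |D|^{1/2} S` with `S`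
the sign diagonal of `D`; zero-padding commutes with the products involved. -/

open Matrix

/-- Zero-padding of a `p×q` matrix to an `r×r` matrix. -/
def padMat {p q : ℕ} (r : ℕ) (A : Matrix (Fin p) (Fin q) ℝ) :
    Matrix (Fin r) (Fin r) ℝ :=
  Matrix.of fun i j =>
    if hi : (i : ℕ) < p then
      if hj : (j : ℕ) < q then A ⟨i, hi⟩ ⟨j, hj⟩ else 0
    else 0

theorem exists_orthonormalBasis_smul_eq {ι E : Type*} [Fintype ι] [NormedAddCommGroup E]
    [InnerProductSpace ℝ E] [FiniteDimensional ℝ E] (hcard : Module.finrank ℝ E = Fintype.card ι)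
    {v : ι → E} (hv : Pairwise fun i j => inner ℝ (v i) (v j) = 0) :
    ∃ (b : OrthonormalBasis ι ℝ E) (σ : ι → ℝ), ∀ i, v i = σ i • b i := by
  set s : Set ι := {i | v i ≠ 0}
  have hon : Orthonormal ℝ (s.domRestrict fun i => ‖v i‖⁻¹ • v i) := by
    refine ⟨fun i => norm_smul_inv_norm i.2, fun i j hij => ?_⟩
    change inner ℝ (‖v i‖⁻¹ • v i) (‖v j‖⁻¹ • v j) = 0
    rw [inner_smul_left, inner_smul_right, hv (Subtype.coe_ne_coe.mpr hij), mul_zero, mul_zero]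
  obtain ⟨b, hb⟩ := hon.exists_orthonormalBasis_extension_of_card_eq hcard
  refine ⟨b, fun i => ‖v i‖, fun i => ?_⟩
  by_cases hi : v i = 0
  · simp [hi]
  · rw [hb i hi, smul_smul, mul_inv_cancel₀ (norm_ne_zero_iff.mpr hi), one_smul]

theorem Matrix.abs_transpose_mul_apply_le {m n : Type*} [Fintype m] (A B : Matrix m n ℝ) (i : n) :
    |(Aᵀ * B) i i| ≤ ((Aᵀ * A) i i + (Bᵀ * B) i i) / 2 := by
  simp only [mul_apply, transpose_apply]
  rw [← Finset.sum_add_distrib, Finset.sum_div]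
  refine (Finset.abs_sum_le_sum_abs _ _).trans (Finset.sum_le_sum fun k _ => ?_)
  rw [abs_mul]
  nlinarith [sq_nonneg (|A k i| - |B k i|), sq_abs (A k i), sq_abs (B k i)]

variable {n : Type*} [Fintype n] [DecidableEq n]

theorem OrthonormalBasis.transpose_mul_self_toMatrix
    (b : OrthonormalBasis n ℝ (EuclideanSpace ℝ n)) :
    ((EuclideanSpace.basisFun n ℝ).toBasis.toMatrix b)ᵀ *
      (EuclideanSpace.basisFun n ℝ).toBasis.toMatrix b = 1 := by
  have := mem_unitaryGroup_iff'.mp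
    ((EuclideanSpace.basisFun n ℝ).toMatrix_orthonormalBasis_mem_unitary b)
  rwa [star_eq_conjTranspose, conjTranspose_eq_transpose_of_trivial] at this

theorem Matrix.exists_orthogonal_mul_diagonal_mul_transpose (C : Matrix n n ℝ) :
    ∃ (Q W : Matrix n n ℝ) (σ : n → ℝ), Qᵀ * Q = 1 ∧ Wᵀ * W = 1 ∧ C = Q * diagonal σ * Wᵀ := by
  have hA : (Cᵀ * C).IsHermitian := by
    simpa [conjTranspose_eq_transpose_of_trivial] using isHermitian_conjTranspose_mul_self C
  set w := hA.eigenvectorBasis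
  have hv : Pairwise fun i j =>
      inner ℝ (WithLp.toLp 2 (C *ᵥ w i)) (WithLp.toLp 2 (C *ᵥ w j)) = 0 := by
    intro i j hij
    have hw : inner ℝ (w i) (w j) = 0 := w.orthonormal.2 hij
    rw [EuclideanSpace.inner_eq_star_dotProduct] at hw ⊢
    simp only [star_trivial] at hw ⊢
    rw [dotProduct_mulVec, ← vecMul_transpose, vecMul_vecMul, ← dotProduct_mulVec,
      hA.mulVec_eigenvectorBasis, dotProduct_smul, hw, smul_zero]
  obtain ⟨b, σ, hbσ⟩ := exists_orthonormalBasis_smul_eq (by simp) hv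
  set W := (EuclideanSpace.basisFun n ℝ).toBasis.toMatrix w
  have hCW : C * W = (EuclideanSpace.basisFun n ℝ).toBasis.toMatrix b * diagonal σ := by
    ext i j
    have hj := congrArg (· i) (hbσ j)
    simp only [PiLp.smul_apply, smul_eq_mul, mulVec, dotProduct] at hj
    rw [mul_diagonal, mul_apply]
    simp only [W, Module.Basis.toMatrix_apply,
      OrthonormalBasis.coe_toBasis_repr_apply, EuclideanSpace.basisFun_repr, hj, mul_comm]
  refine ⟨_, W, σ, b.transpose_mul_self_toMatrix, w.transpose_mul_self_toMatrix, ?_⟩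
  rw [← hCW, Matrix.mul_assoc, mul_eq_one_comm.mp w.transpose_mul_self_toMatrix, Matrix.mul_one]

theorem Matrix.diagonal_transpose_mul_self {ε : n → ℝ} (hε : ∀ i, ε i * ε i = 1) :
    (diagonal ε)ᵀ * diagonal ε = 1 := by
  rw [diagonal_transpose, diagonal_mul_diagonal, ← diagonal_one]
  exact congrArg diagonal (funext hε)

def OrthogonallyInvariant (f : Matrix n n ℝ → ℝ) : Prop :=
  ∀ Q W A : Matrix n n ℝ, Qᵀ * Q = 1 → Wᵀ * W = 1 → f (Q * A * W) = f A

theorem sum_units_mul_units (i j : n) :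
    ∑ ε : n → ℤˣ, ((ε i : ℤ) : ℝ) * ((ε j : ℤ) : ℝ) =
      if i = j then (Fintype.card (n → ℤˣ) : ℝ) else 0 := by
  split_ifs with hij
  · subst hij
    simp [← Int.cast_mul, ← Units.val_mul, Int.units_mul_self]
  · refine self_eq_neg.mp ?_
    conv_lhs => rw [← Equiv.sum_comp (Equiv.mulRight (Pi.mulSingle i (-1)))]
    rw [← Finset.sum_neg_distrib]
    refine Finset.sum_congr rfl fun ε _ => ?_
    simp [Pi.mulSingle_eq_of_ne' hij]

namespace OrthogonallyInvariant

variable {p : Seminorm ℝ (Matrix n n ℝ)} (hp : OrthogonallyInvariant p)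
include hp

theorem map_diagonal_diag_le (A : Matrix n n ℝ) : p (diagonal A.diag) ≤ p A := by
  set D : (n → ℤˣ) → Matrix n n ℝ := fun ε => diagonal fun i => ((ε i : ℤ) : ℝ)
  have hD : ∀ ε, (D ε)ᵀ * D ε = 1 := fun ε =>
    diagonal_transpose_mul_self fun i => by simp [← Int.cast_mul, ← Units.val_mul]
  have havg : diagonal A.diag = (Fintype.card (n → ℤˣ) : ℝ)⁻¹ • ∑ ε, D ε * A * D ε := by
    ext i j
    simp only [Matrix.smul_apply, Matrix.sum_apply, D, diagonal_mul, mul_diagonal, smul_eq_mul]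
    simp_rw [mul_right_comm _ (A i j), ← Finset.sum_mul, sum_units_mul_units]
    split_ifs with hij
    · subst hij
      simp
    · simp [hij]
  have hcard : (0 : ℝ) < Fintype.card (n → ℤˣ) := by exact_mod_cast Fintype.card_pos
  calc p (diagonal A.diag)
      ≤ (Fintype.card (n → ℤˣ) : ℝ)⁻¹ * ∑ ε, p (D ε * A * D ε) := by
        rw [havg, map_smul_eq_mul, Real.norm_of_nonneg (inv_nonneg.mpr hcard.le)]
        exact mul_le_mul_of_nonneg_left
          (Finset.le_sum_of_subadditive p (map_zero p).le (map_add_le_add p) _ _)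
          (inv_nonneg.mpr hcard.le)
    _ = p A := by
        simp only [hp _ _ A (hD _) (hD _), Finset.sum_const, Finset.card_univ, nsmul_eq_mul]
        field_simp

theorem map_mul_left {Q : Matrix n n ℝ} (hQ : Qᵀ * Q = 1) (A : Matrix n n ℝ) :
    p (Q * A) = p A := by
  simpa using hp Q 1 A hQ (by simp)

theorem map_conj {Q : Matrix n n ℝ} (hQ : Qᵀ * Q = 1) (A : Matrix n n ℝ) :
    p (Q * A * Qᵀ) = p A :=
  hp Q Qᵀ A hQ (by rw [transpose_transpose]; exact mul_eq_one_comm.mp hQ)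

theorem map_transpose_conj {Q : Matrix n n ℝ} (hQ : Qᵀ * Q = 1) (A : Matrix n n ℝ) :
    p (Qᵀ * A * Q) = p A :=
  hp Qᵀ Q A (by rw [transpose_transpose]; exact mul_eq_one_comm.mp hQ) hQ

theorem map_diagonal_mul_le {t : n → ℝ} (ht : ∀ i, |t i| ≤ 1) (A : Matrix n n ℝ) :
    p (diagonal t * A) ≤ p A := by
  suffices ∀ s : Finset n, ∀ t : n → ℝ, (∀ i, |t i| ≤ 1) → (∀ i ∉ s, t i * t i = 1) →
      p (diagonal t * A) ≤ p A from this Finset.univ t ht (by simp)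
  intro s
  induction s using Finset.induction_on with
  | empty =>
    intro t _ hsign
    exact (hp.map_mul_left (diagonal_transpose_mul_self fun i => hsign i (by simp)) A).le
  | insert j s _ ih =>
    intro t ht hsign
    have hupd : ∀ c : ℝ, c * c = 1 → p (diagonal (Function.update t j c) * A) ≤ p A := by
      intro c hc
      refine ih _ (fun i => ?_) (fun i hi => ?_)
      · rcases eq_or_ne i j with rfl | hij
        · rcases mul_self_eq_one_iff.mp hc with rfl | rfl <;> simp
        · simpa [hij] using ht i
      · rcases eq_or_ne i j with rfl | hij
        · simpa using hc
        · simpa [hij] using hsign i (by simp [hij, hi])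
    have hsplit : diagonal t * A = ((1 + t j) / 2) • (diagonal (Function.update t j 1) * A) +
        ((1 - t j) / 2) • (diagonal (Function.update t j (-1)) * A) := by
      rw [← smul_mul_assoc, ← smul_mul_assoc, ← Matrix.add_mul, ← diagonal_smul, ← diagonal_smul,
        diagonal_add]
      congr 2
      ext i
      rcases eq_or_ne i j with rfl | hij
      · simp only [Pi.smul_apply, Function.update_self, smul_eq_mul]
        ring
      · simp only [Pi.smul_apply, Function.update_of_ne hij, smul_eq_mul]
        ring
    have htj := abs_le.mp (ht j)
    calc p (diagonal t * A)
        ≤ (1 + t j) / 2 * p (diagonal (Function.update t j 1) * A) +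
          (1 - t j) / 2 * p (diagonal (Function.update t j (-1)) * A) := by
          rw [hsplit]
          refine (map_add_le_add p _ _).trans_eq ?_
          rw [map_smul_eq_mul, map_smul_eq_mul, Real.norm_of_nonneg (by linarith),
            Real.norm_of_nonneg (by linarith)]
      _ ≤ (1 + t j) / 2 * p A + (1 - t j) / 2 * p A := by
          gcongr
          · linarith
          · exact hupd 1 (by norm_num)
          · linarith
          · exact hupd (-1) (by norm_num)
      _ = p A := by ring

theorem map_diagonal_le_of_abs_le {g h : n → ℝ} (hgh : ∀ i, |g i| ≤ h i) :
    p (diagonal g) ≤ p (diagonal h) := by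
  have hg : diagonal g = diagonal (fun i => g i / h i) * diagonal h := by
    rw [diagonal_mul_diagonal]
    congr 1
    ext i
    rcases ((abs_nonneg _).trans (hgh i)).eq_or_lt with h0 | hpos
    · simp [← h0, abs_nonpos_iff.mp (h0 ▸ hgh i)]
    · exact (div_mul_cancel₀ _ hpos.ne').symm
  rw [hg]
  refine hp.map_diagonal_mul_le (fun i => ?_) _
  rw [abs_div]
  exact div_le_one_of_le₀ ((hgh i).trans (le_abs_self _)) (abs_nonneg _)

theorem map_transpose_mul_le (X Y : Matrix n n ℝ) :
    p (Xᵀ * Y) ≤ (p (Xᵀ * X) + p (Yᵀ * Y)) / 2 := by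
  obtain ⟨Q, W, σ, hQ, hW, hC⟩ := exists_orthogonal_mul_diagonal_mul_transpose (Xᵀ * Y)
  set A := X * Q
  set B := Y * W
  have hAB : Aᵀ * B = diagonal σ := by
    calc Aᵀ * B = Qᵀ * (Xᵀ * Y) * W := by simp only [A, B, transpose_mul, Matrix.mul_assoc]
      _ = diagonal σ := by
        rw [hC, ← Matrix.mul_assoc, ← Matrix.mul_assoc, hQ, Matrix.one_mul, Matrix.mul_assoc, hW,
          Matrix.mul_one]
  have hσ : ∀ i, |σ i| ≤ ((Aᵀ * A).diag i + (Bᵀ * B).diag i) / 2 := fun i => by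
    simpa [hAB] using abs_transpose_mul_apply_le A B i
  have hWt : Wᵀᵀ * Wᵀ = 1 := by rw [transpose_transpose]; exact mul_eq_one_comm.mp hW
  calc p (Xᵀ * Y) = p (diagonal σ) := by rw [hC]; exact hp Q Wᵀ _ hQ hWt
    _ ≤ p ((1 / 2 : ℝ) • (diagonal (Aᵀ * A).diag + diagonal (Bᵀ * B).diag)) := by
        rw [diagonal_add, ← diagonal_smul]
        refine hp.map_diagonal_le_of_abs_le fun i => (hσ i).trans_eq ?_
        simp only [Pi.smul_apply, smul_eq_mul]
        ring
    _ ≤ (p (diagonal (Aᵀ * A).diag) + p (diagonal (Bᵀ * B).diag)) / 2 := by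
        rw [map_smul_eq_mul, Real.norm_of_nonneg (by norm_num), one_div_mul_eq_div]
        gcongr
        exact map_add_le_add p _ _
    _ ≤ (p (Aᵀ * A) + p (Bᵀ * B)) / 2 := by
        gcongr <;> exact hp.map_diagonal_diag_le _
    _ = (p (Xᵀ * X) + p (Yᵀ * Y)) / 2 := by
        simp only [A, B, transpose_mul, Matrix.mul_assoc]
        rw [← Matrix.mul_assoc Xᵀ, ← Matrix.mul_assoc Yᵀ, ← Matrix.mul_assoc, ← Matrix.mul_assoc Wᵀ,
          hp.map_transpose_conj hQ, hp.map_transpose_conj hW]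

theorem map_mul_transpose_self (X : Matrix n n ℝ) : p (X * Xᵀ) = p (Xᵀ * X) := by
  obtain ⟨Q, W, σ, hQ, hW, rfl⟩ := exists_orthogonal_mul_diagonal_mul_transpose X
  have hXXt :
      Q * diagonal σ * Wᵀ * (Q * diagonal σ * Wᵀ)ᵀ = Q * (diagonal σ * diagonal σ) * Qᵀ := by
    simp only [transpose_mul, transpose_transpose, diagonal_transpose, Matrix.mul_assoc]
    rw [← Matrix.mul_assoc Wᵀ, hW, Matrix.one_mul]
  have hXtX :
      (Q * diagonal σ * Wᵀ)ᵀ * (Q * diagonal σ * Wᵀ) = W * (diagonal σ * diagonal σ) * Wᵀ := by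
    simp only [transpose_mul, transpose_transpose, diagonal_transpose, Matrix.mul_assoc]
    rw [← Matrix.mul_assoc Qᵀ, hQ, Matrix.one_mul]
  rw [hXXt, hXtX, hp.map_conj hQ, hp.map_conj hW]

theorem map_mul_transpose_le (X Y : Matrix n n ℝ) :
    p (X * Yᵀ) ≤ (p (Xᵀ * X) + p (Yᵀ * Y)) / 2 := by
  have := hp.map_transpose_mul_le Xᵀ Yᵀ
  rwa [transpose_transpose, transpose_transpose, hp.map_mul_transpose_self,
    hp.map_mul_transpose_self] at this

theorem map_mul_diagonal_mul_transpose_le (U V : Matrix n n ℝ) (d : n → ℝ) :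
    p (U * diagonal d * Vᵀ) ≤
      (p (diagonal (fun i => √|d i|) * Uᵀ * U * diagonal (fun i => √|d i|)) +
        p (diagonal (fun i => √|d i|) * Vᵀ * V * diagonal (fun i => √|d i|))) / 2 := by
  set E : Matrix n n ℝ := diagonal fun i => √|d i|
  set S : Matrix n n ℝ := diagonal fun i => if 0 ≤ d i then 1 else -1
  have hS : Sᵀ * S = 1 := diagonal_transpose_mul_self fun i => by split_ifs <;> norm_num
  have hESE : E * S * E = diagonal d := by
    simp only [E, S, diagonal_mul_diagonal]
    congr 1
    ext i
    rw [mul_right_comm, Real.mul_self_sqrt (abs_nonneg _)]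
    split_ifs with h
    · simp [abs_of_nonneg h]
    · simp [abs_of_neg (not_le.mp h)]
  have hXY : U * E * (V * E * S)ᵀ = U * diagonal d * Vᵀ := by
    simp only [transpose_mul, E, S, diagonal_transpose, ← hESE, Matrix.mul_assoc]
  have hYY : p ((V * E * S)ᵀ * (V * E * S)) = p (E * Vᵀ * V * E) := by
    rw [← hp.map_conj hS (E * Vᵀ * V * E)]
    simp only [transpose_mul, E, S, diagonal_transpose, Matrix.mul_assoc]
  have hXX : (U * E)ᵀ * (U * E) = E * Uᵀ * U * E := by
    simp only [transpose_mul, E, diagonal_transpose, Matrix.mul_assoc]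
  have := hp.map_mul_transpose_le (U * E) (V * E * S)
  rwa [hXY, hXX, hYY] at this

end OrthogonallyInvariant

theorem padMat_transpose {p q : ℕ} (r : ℕ) (A : Matrix (Fin p) (Fin q) ℝ) :
    padMat r Aᵀ = (padMat r A)ᵀ := by
  ext i j
  simp only [padMat, of_apply, transpose_apply]
  split_ifs <;> rfl

theorem padMat_mul {p q t : ℕ} (r : ℕ) (hq : q ≤ r) (A : Matrix (Fin p) (Fin q) ℝ)
    (B : Matrix (Fin q) (Fin t) ℝ) : padMat r (A * B) = padMat r A * padMat r B := by
  ext i j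
  simp only [padMat, of_apply, mul_apply]
  split_ifs with hi hj
  · refine Fintype.sum_of_injective (Fin.castLE hq) (Fin.castLE_injective hq) _ _
      (fun k hk => ?_) (fun k => by simp)
    have : ¬ (k : ℕ) < q := fun h => hk ⟨⟨k, h⟩, rfl⟩
    simp [this]
  all_goals simp

theorem padMat_diagonal {n : ℕ} (r : ℕ) (d : Fin n → ℝ) :
    padMat r (diagonal d) = diagonal fun i : Fin r => if h : (i : ℕ) < n then d ⟨i, h⟩ else 0 := by
  ext i j
  rcases eq_or_ne i j with rfl | hij
  · simp only [padMat, of_apply, diagonal_apply_eq]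
    split_ifs <;> rfl
  · simp [padMat, hij, Fin.val_ne_of_ne hij, Fin.ext_iff]

/-- Matrix arithmetic-geometric mean inequality for unitarily invariant norms:
for `U, V : m×n`, `D = diag(d) : n×n`, and any unitarily invariant matrix norm
`N` (on `r×r` matrices, with matrices of differing sizes zero-padded),
`N(U D Vᵀ) ≤ (1/2)(N(|D|^{1/2} Uᵀ U |D|^{1/2}) + N(|D|^{1/2} Vᵀ V |D|^{1/2}))`. -/
theorem stmt3 (m n r : ℕ) (hm : m ≤ r) (hn : n ≤ r)
    (U V : Matrix (Fin m) (Fin n) ℝ) (d : Fin n → ℝ)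
    (N : Matrix (Fin r) (Fin r) ℝ → ℝ)
    (hsub : ∀ A B : Matrix (Fin r) (Fin r) ℝ, N (A + B) ≤ N A + N B)
    (hhom : ∀ (c : ℝ) (A : Matrix (Fin r) (Fin r) ℝ), N (c • A) = |c| * N A)
    (hinv : ∀ Q W A : Matrix (Fin r) (Fin r) ℝ,
      Qᵀ * Q = 1 → Wᵀ * W = 1 → N (Q * A * W) = N A) :
    N (padMat r (U * Matrix.diagonal d * Vᵀ))
      ≤ (1 / 2) *
        (N (padMat r (Matrix.diagonal (fun i => Real.sqrt |d i|) * Uᵀ * U *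
              Matrix.diagonal (fun i => Real.sqrt |d i|)))
          + N (padMat r (Matrix.diagonal (fun i => Real.sqrt |d i|) * Vᵀ * V *
              Matrix.diagonal (fun i => Real.sqrt |d i|)))) := by
  let p : Seminorm ℝ (Matrix (Fin r) (Fin r) ℝ) :=
    Seminorm.of N hsub fun c A => by rw [Real.norm_eq_abs]; exact hhom c A
  set d' : Fin r → ℝ := fun i => if h : (i : ℕ) < n then d ⟨i, h⟩ else 0
  have hsqrt : (padMat r (diagonal fun i => √|d i|)) = diagonal fun i => √|d' i| := by
    rw [padMat_diagonal]
    congr 1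
    ext i
    split_ifs with h <;> simp [d', h]
  have := (show OrthogonallyInvariant p from hinv).map_mul_diagonal_mul_transpose_le
    (padMat r U) (padMat r V) d'
  simp only [padMat_mul r hn, padMat_mul r hm, padMat_transpose, hsqrt, padMat_diagonal]
  change N _ ≤ (N _ + N _) / 2 at this
  linarith
end

section
/- Let f, g ∈ L¹(ℝ) ∩ L²(ℝ) with weak derivatives f', g' ∈ L²(ℝ), and let φ_{σ²}(t) = (2πσ²)^{-1/2}·exp(-t²/(2σ²)) be the Gaussian density with variance σ² > 0. Then |⟨f, g⟩_{L²} - ⟨φ_{σ²} * f, φ_{σ²} * g⟩_{L²}| ≤ σ²·‖f'‖_{L²}·‖g'‖_{L²}. -/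
open Real MeasureTheory

/-- The one-dimensional Gaussian density with variance `v`. -/
noncomputable def gauss (v : ℝ) (t : ℝ) : ℝ :=
  (Real.sqrt (2 * Real.pi * v))⁻¹ * Real.exp (-(t ^ 2) / (2 * v))

/-!
For a probability measure `ν` on `ℝ` put `K(s, t) = ∫ f(x - s) g(x - t) dx`. By Fubini,
`⟨ν * f, ν * g⟩ = ∫ K d(ν ⊗ ν)`, and since `ν ⊗ ν` is invariant under `(s, t) ↦ (t, s)`,
`⟨f, g⟩ - ⟨ν * f, ν * g⟩` is half the `ν ⊗ ν`-average of the second difference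
`∫ (f(x - s) - f(x - t)) (g(x - s) - g(x - t)) dx`. Writing `f(x - s) - f(x - t)` as the
integral of `f'(x - r)` over `r ∈ (s, t]`, Fubini and Cauchy–Schwarz bound the second difference
by `(t - s)² ‖f'‖₂ ‖g'‖₂`, and `½ ∫∫ (t - s)² dν dν` is the variance of `ν`, which is `σ²` for
the Gaussian. No Fourier analysis is needed.
-/

open Set ProbabilityTheory

theorem abs_integral_mul_le_eLpNorm_mul_eLpNorm {α : Type*} [MeasurableSpace α] {μ : Measure α}
    {F G : α → ℝ} (hF : MemLp F 2 μ) (hG : MemLp G 2 μ) :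
    |∫ x, F x * G x ∂μ| ≤ (eLpNorm F 2 μ).toReal * (eLpNorm G 2 μ).toReal := by
  have h := abs_real_inner_le_norm (hF.toLp F) (hG.toLp G)
  rw [Lp.norm_toLp, Lp.norm_toLp, L2.inner_def] at h
  convert h using 2
  refine integral_congr_ae ?_
  filter_upwards [hF.coeFn_toLp, hG.coeFn_toLp] with x hFx hGx
  simp [hFx, hGx, mul_comm]

theorem abs_integral_comp_sub_mul_comp_sub_le {F G : ℝ → ℝ} (hF : MemLp F 2 volume)
    (hG : MemLp G 2 volume) (s t : ℝ) :
    |∫ x, F (x - s) * G (x - t)|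
      ≤ (eLpNorm F 2 volume).toReal * (eLpNorm G 2 volume).toReal := by
  have hs := measurePreserving_sub_right volume s
  have ht := measurePreserving_sub_right volume t
  rw [← eLpNorm_comp_measurePreserving hF.1 hs, ← eLpNorm_comp_measurePreserving hG.1 ht]
  exact abs_integral_mul_le_eLpNorm_mul_eLpNorm (hF.comp_measurePreserving hs)
    (hG.comp_measurePreserving ht)

section FiniteMeasure

variable {μ μ' : Measure ℝ} [IsFiniteMeasure μ] [IsFiniteMeasure μ'] {F G : ℝ → ℝ}

theorem integrable_comp_sub_mul_comp_sub (hFm : Measurable F) (hGm : Measurable G)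
    (hF : MemLp F 2 volume) (hG : MemLp G 2 volume) :
    Integrable (fun p : ℝ × ℝ × ℝ => F (p.1 - p.2.1) * G (p.1 - p.2.2))
      (volume.prod (μ.prod μ')) := by
  refine (integrable_prod_iff' (by fun_prop)).2 ⟨ae_of_all _ fun z => ?_, ?_⟩
  · exact (hF.comp_measurePreserving (measurePreserving_sub_right volume z.1)).integrable_mul
      (hG.comp_measurePreserving (measurePreserving_sub_right volume z.2))
  · refine Integrable.of_bound (C := (eLpNorm F 2 volume).toReal * (eLpNorm G 2 volume).toReal)
      (StronglyMeasurable.integral_prod_left'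
        (f := fun p : ℝ × ℝ × ℝ => ‖F (p.1 - p.2.1) * G (p.1 - p.2.2)‖)
        (by fun_prop)).aestronglyMeasurable
      (ae_of_all _ fun z => ?_)
    have h := abs_integral_comp_sub_mul_comp_sub_le hF.norm hG.norm z.1 z.2
    rw [eLpNorm_norm, eLpNorm_norm] at h
    simpa only [norm_mul, Real.norm_eq_abs] using h

theorem integral_conv_mul_conv (hFm : Measurable F) (hGm : Measurable G)
    (hF : MemLp F 2 volume) (hG : MemLp G 2 volume) :
    ∫ x, (∫ s, F (x - s) ∂μ) * (∫ t, G (x - t) ∂μ')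
      = ∫ z, (∫ x, F (x - z.1) * G (x - z.2)) ∂(μ.prod μ') := by
  simp_rw [← integral_prod_mul]
  exact integral_integral_swap (integrable_comp_sub_mul_comp_sub hFm hGm hF hG)

theorem abs_integral_conv_mul_conv_le (hFm : Measurable F) (hGm : Measurable G)
    (hF : MemLp F 2 volume) (hG : MemLp G 2 volume) :
    |∫ x, (∫ s, F (x - s) ∂μ) * (∫ t, G (x - t) ∂μ')|
      ≤ μ.real univ * μ'.real univ * (eLpNorm F 2 volume).toReal
          * (eLpNorm G 2 volume).toReal := by
  rw [integral_conv_mul_conv hFm hGm hF hG, ← Real.norm_eq_abs]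
  refine (norm_integral_le_of_norm_le_const (ae_of_all _ fun z : ℝ × ℝ =>
    abs_integral_comp_sub_mul_comp_sub_le hF hG z.1 z.2)).trans_eq ?_
  rw [← univ_prod_univ, measureReal_prod_prod]
  ring

end FiniteMeasure

theorem measurable_of_forall_hasDerivAt {f f' : ℝ → ℝ} (hfd : ∀ x, HasDerivAt f (f' x) x) :
    Measurable f' := by
  rw [show f' = deriv f from funext fun x => (hfd x).deriv.symm]
  exact measurable_deriv f

theorem sub_comp_sub_eq_setIntegral {f f' : ℝ → ℝ} (hfd : ∀ x, HasDerivAt f (f' x) x)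
    (hf' : LocallyIntegrable f' volume) (x : ℝ) {s t : ℝ} (hst : s ≤ t) :
    f (x - s) - f (x - t) = ∫ r in Ioc s t, f' (x - r) := by
  rw [← intervalIntegral.integral_of_le hst, intervalIntegral.integral_comp_sub_left,
    intervalIntegral.integral_eq_sub_of_hasDerivAt (fun y _ => hfd y)
      (hf'.integrableOn_isCompact isCompact_uIcc).intervalIntegrable]

section SecondDifference

variable {f g f' g' : ℝ → ℝ}

theorem integral_sub_mul_sub_eq (hf : MemLp f 2 volume) (hg : MemLp g 2 volume) (s t : ℝ) :
    ∫ x, (f (x - s) - f (x - t)) * (g (x - s) - g (x - t))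
      = 2 * (∫ x, f x * g x) - (∫ x, f (x - s) * g (x - t)) - ∫ x, f (x - t) * g (x - s) := by
  have h_int (a b : ℝ) : Integrable (fun x => f (x - a) * g (x - b)) :=
    (hf.comp_measurePreserving (measurePreserving_sub_right volume a)).integrable_mul
      (hg.comp_measurePreserving (measurePreserving_sub_right volume b))
  have h_diag (r : ℝ) : ∫ x, f (x - r) * g (x - r) = ∫ x, f x * g x :=
    integral_sub_right_eq_self (fun x => f x * g x) r
  simp_rw [sub_mul, mul_sub]
  rw [integral_sub ((h_int s s).sub' (h_int s t)) ((h_int t s).sub' (h_int t t)),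
    integral_sub (h_int s s) (h_int s t), integral_sub (h_int t s) (h_int t t),
    h_diag s, h_diag t]
  ring

theorem abs_integral_sub_mul_sub_le (hfd : ∀ x, HasDerivAt f (f' x) x)
    (hgd : ∀ x, HasDerivAt g (g' x) x) (hf' : MemLp f' 2 volume) (hg' : MemLp g' 2 volume)
    (s t : ℝ) :
    |∫ x, (f (x - s) - f (x - t)) * (g (x - s) - g (x - t))|
      ≤ (t - s) ^ 2 * (eLpNorm f' 2 volume).toReal * (eLpNorm g' 2 volume).toReal := by
  wlog hst : s ≤ t generalizing s t
  · have h_symm : ∀ x, (f (x - s) - f (x - t)) * (g (x - s) - g (x - t))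
        = (f (x - t) - f (x - s)) * (g (x - t) - g (x - s)) := fun x => by ring
    simp_rw [h_symm, ← neg_sub s t, neg_sq]
    exact this t s (le_of_not_ge hst)
  simp_rw [sub_comp_sub_eq_setIntegral hfd (hf'.locallyIntegrable one_le_two) _ hst,
    sub_comp_sub_eq_setIntegral hgd (hg'.locallyIntegrable one_le_two) _ hst]
  refine (abs_integral_conv_mul_conv_le (measurable_of_forall_hasDerivAt hfd)
    (measurable_of_forall_hasDerivAt hgd) hf' hg').trans_eq ?_
  rw [measureReal_restrict_apply_univ, Real.volume_real_Ioc_of_le hst]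
  ring

end SecondDifference

theorem integral_sub_sq_prod_self (ν : Measure ℝ) [IsProbabilityMeasure ν]
    (hν : MemLp id 2 ν) :
    ∫ z, (z.2 - z.1) ^ 2 ∂(ν.prod ν) = 2 * Var[id; ν] := by
  have h1 : Integrable (fun t : ℝ => t) ν := hν.integrable one_le_two
  have h2 : Integrable (fun t : ℝ => t ^ 2) ν := hν.integrable_sq
  have h_expand (z : ℝ × ℝ) : (z.2 - z.1) ^ 2 = (z.2 ^ 2 + z.1 ^ 2) - 2 * (z.1 * z.2) := by
    ring
  simp_rw [h_expand]
  rw [integral_sub ((h2.comp_snd ν).fun_add (h2.comp_fst ν)) ((h1.mul_prod h1).const_mul 2),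
    integral_add (h2.comp_snd ν) (h2.comp_fst ν), integral_const_mul,
    integral_prod_mul (fun t => t) (fun t => t), integral_fun_snd (fun t => t ^ 2),
    integral_fun_fst (fun t => t ^ 2), variance_eq_sub hν]
  simp only [probReal_univ, smul_eq_mul, one_mul, Pi.pow_apply, id_eq]
  ring

theorem integral_mul_sub_integral_conv_mul_conv (ν : Measure ℝ) [IsProbabilityMeasure ν]
    {f g : ℝ → ℝ} (hfm : Measurable f) (hgm : Measurable g)
    (hf : MemLp f 2 volume) (hg : MemLp g 2 volume) :
    (∫ x, f x * g x) - ∫ x, (∫ y, f (x - y) ∂ν) * (∫ y, g (x - y) ∂ν)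
      = (∫ z, (∫ x, (f (x - z.1) - f (x - z.2)) * (g (x - z.1) - g (x - z.2))) ∂(ν.prod ν))
          / 2 := by
  set K : ℝ × ℝ → ℝ := fun z => ∫ x, f (x - z.1) * g (x - z.2)
  have hK : Integrable K (ν.prod ν) :=
    (integrable_comp_sub_mul_comp_sub hfm hgm hf hg).integral_prod_right
  have h_swap : ∫ z, K z.swap ∂(ν.prod ν) = ∫ z, K z ∂(ν.prod ν) := integral_prod_swap K
  have h_expand (z : ℝ × ℝ) :
      ∫ x, (f (x - z.1) - f (x - z.2)) * (g (x - z.1) - g (x - z.2))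
        = 2 * (∫ x, f x * g x) - K z - K z.swap :=
    integral_sub_mul_sub_eq hf hg z.1 z.2
  rw [integral_conv_mul_conv hfm hgm hf hg, integral_congr_ae (ae_of_all _ h_expand),
    integral_sub ((integrable_const _).sub' hK) (hK.swap : Integrable (fun z => K z.swap) _),
    integral_sub (integrable_const _) hK, integral_const, probReal_univ, one_smul, h_swap]
  ring

theorem abs_integral_mul_sub_integral_conv_mul_conv_le (ν : Measure ℝ) [IsProbabilityMeasure ν]
    (hν : MemLp id 2 ν) {f g f' g' : ℝ → ℝ} (hf : MemLp f 2 volume) (hg : MemLp g 2 volume)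
    (hfd : ∀ x, HasDerivAt f (f' x) x) (hgd : ∀ x, HasDerivAt g (g' x) x)
    (hf' : MemLp f' 2 volume) (hg' : MemLp g' 2 volume) :
    |(∫ x, f x * g x) - ∫ x, (∫ y, f (x - y) ∂ν) * (∫ y, g (x - y) ∂ν)|
      ≤ Var[id; ν] * (eLpNorm f' 2 volume).toReal * (eLpNorm g' 2 volume).toReal := by
  have hfm : Measurable f :=
    (continuous_iff_continuousAt.2 fun x => (hfd x).continuousAt).measurable
  have hgm : Measurable g :=
    (continuous_iff_continuousAt.2 fun x => (hgd x).continuousAt).measurable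
  have h_sq : Integrable (fun z : ℝ × ℝ => (z.2 - z.1) ^ 2) (ν.prod ν) :=
    ((hν.comp_measurePreserving measurePreserving_snd).sub
      (hν.comp_measurePreserving measurePreserving_fst)).integrable_sq
  rw [integral_mul_sub_integral_conv_mul_conv ν hfm hgm hf hg, abs_div, abs_two,
    div_le_iff₀ two_pos]
  refine (norm_integral_le_of_norm_le ((h_sq.mul_const _).mul_const _)
    (f := fun z : ℝ × ℝ => ∫ x, (f (x - z.1) - f (x - z.2)) * (g (x - z.1) - g (x - z.2)))
    (ae_of_all _ fun z => abs_integral_sub_mul_sub_le hfd hgd hf' hg' z.1 z.2)).trans_eq ?_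
  rw [integral_mul_const, integral_mul_const, integral_sub_sq_prod_self ν hν]
  ring

theorem integral_gauss_mul {v : ℝ} (hv : 0 < v) (F : ℝ → ℝ) :
    ∫ y, gauss v y * F y = ∫ y, F y ∂gaussianReal 0 v.toNNReal := by
  rw [integral_gaussianReal_eq_integral_smul (by simpa using hv)]
  simp [gauss, gaussianPDFReal, hv.le]

theorem stmt5_general (σ : ℝ) (hσ : 0 < σ) (f g f' g' : ℝ → ℝ)
    (hf2 : MemLp f 2 (volume : Measure ℝ))
    (hg2 : MemLp g 2 (volume : Measure ℝ))
    (hfd : ∀ x, HasDerivAt f (f' x) x) (hgd : ∀ x, HasDerivAt g (g' x) x)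
    (hf'2 : MemLp f' 2 (volume : Measure ℝ))
    (hg'2 : MemLp g' 2 (volume : Measure ℝ)) :
    |(∫ x : ℝ, f x * g x)
        - ∫ x : ℝ, (∫ y : ℝ, gauss (σ ^ 2) y * f (x - y))
            * (∫ y : ℝ, gauss (σ ^ 2) y * g (x - y))|
      ≤ σ ^ 2 * (eLpNorm f' 2 volume).toReal * (eLpNorm g' 2 volume).toReal := by
  have h := abs_integral_mul_sub_integral_conv_mul_conv_le (gaussianReal 0 (σ ^ 2).toNNReal)
    (memLp_id_gaussianReal' 2 (by norm_num)) hf2 hg2 hfd hgd hf'2 hg'2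
  rw [variance_id_gaussianReal, Real.coe_toNNReal _ (sq_nonneg σ)] at h
  simpa only [integral_gauss_mul (pow_pos hσ 2)] using h

/-- Let `f, g ∈ L¹(ℝ) ∩ L²(ℝ)` with derivatives `f', g' ∈ L²(ℝ)`, and let
`φ_{σ²}` be the Gaussian density with variance `σ² > 0`.  Then
`|⟨f,g⟩_{L²} - ⟨φ_{σ²}*f, φ_{σ²}*g⟩_{L²}| ≤ σ²·‖f'‖_{L²}·‖g'‖_{L²}`. -/
theorem stmt5 (σ : ℝ) (hσ : 0 < σ) (f g f' g' : ℝ → ℝ)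
    (hf1 : Integrable f) (hf2 : MemLp f 2 (volume : Measure ℝ))
    (hg1 : Integrable g) (hg2 : MemLp g 2 (volume : Measure ℝ))
    (hfd : ∀ x, HasDerivAt f (f' x) x) (hgd : ∀ x, HasDerivAt g (g' x) x)
    (hf'2 : MemLp f' 2 (volume : Measure ℝ))
    (hg'2 : MemLp g' 2 (volume : Measure ℝ)) :
    |(∫ x : ℝ, f x * g x)
        - ∫ x : ℝ, (∫ y : ℝ, gauss (σ ^ 2) y * f (x - y))
            * (∫ y : ℝ, gauss (σ ^ 2) y * g (x - y))|
      ≤ σ ^ 2 * (eLpNorm f' 2 volume).toReal * (eLpNorm g' 2 volume).toReal :=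
  stmt5_general σ hσ f g f' g' hf2 hg2 hfd hgd hf'2 hg'2
end

section
/- For any two square-integrable functions u₀ and v₁ with ‖v₁‖=1, given a compact self-adjoint operator T on L²(ℝ) with eigenvalues (λ_k) and orthonormal eigenbasis (v_k), suppose λ₁ = ‖T‖ > 0 and the spectrum is gapped: λ₁ - |λ_k| ≥ γλ₁ for all k > 1 and some 0 < γ ≤ 1. If |⟨v₁, u₀⟩| ≥ η > 0, then the power method iterates u_{k+1} = T u_k / ‖T u_k‖ satisfy ‖u_k - sign(⟨v₁,u₀⟩)·v₁‖² ≤ 2(1-γ)^{2k}·‖u₀‖²/η². -/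
open Real MeasureTheory
open scoped RealInnerProductSpace

/-!
The `k`-th power iterate is `Tᵏ u₀` normalized. Its coefficient on `v₀` is `λ₀ᵏ ⟨v₀, u₀⟩`,
while its component orthogonal to `v₀` is `Tᵏ` applied to that of `u₀`; by Parseval in the
eigenbasis, `T` has norm at most `(1 - γ) λ₀` on `v₀ᗮ`, so this component has norm at most
`((1 - γ) λ₀)ᵏ ‖u₀‖`. For a unit vector `e` and `a = ⟨e, x⟩ ≠ 0`, elementary geometry gives
`‖x / ‖x‖ - sign a • e‖² ≤ ‖x - a • e‖² / a²`, and the ratio above is `(1 - γ)ᵏ ‖u₀‖ / |⟨v₀, u₀⟩|`.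
-/

theorem Real.sign_mul_of_pos {c : ℝ} (hc : 0 < c) (r : ℝ) : Real.sign (c * r) = Real.sign r := by
  rcases lt_trichotomy r 0 with h | rfl | h
  · rw [Real.sign_of_neg h, Real.sign_of_neg (mul_neg_of_pos_of_neg hc h)]
  · simp
  · rw [Real.sign_of_pos h, Real.sign_of_pos (mul_pos hc h)]

theorem Real.sign_mul_self_eq_abs (r : ℝ) : Real.sign r * r = |r| := by
  rcases lt_trichotomy r 0 with h | rfl | h
  · rw [Real.sign_of_neg h, abs_of_neg h, neg_one_mul]
  · simp
  · rw [Real.sign_of_pos h, abs_of_pos h, one_mul]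

section Normalize

variable {E : Type*} [NormedAddCommGroup E] [InnerProductSpace ℝ E]

theorem inv_norm_smul_apply_inv_norm_smul (T : E →L[ℝ] E) (x : E) :
    ‖T (‖x‖⁻¹ • x)‖⁻¹ • T (‖x‖⁻¹ • x) = ‖T x‖⁻¹ • T x := by
  rcases eq_or_ne x 0 with rfl | hx
  · simp
  have hc : 0 < ‖x‖⁻¹ := inv_pos.mpr (norm_pos_iff.mpr hx)
  rw [map_smul, norm_smul, Real.norm_of_nonneg hc.le, smul_smul, mul_inv, mul_right_comm,
    inv_mul_cancel₀ hc.ne', one_mul]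

theorem power_method_succ_eq (T : E →L[ℝ] E) {u : ℕ → E}
    (hrec : ∀ k, u (k + 1) = ‖T (u k)‖⁻¹ • T (u k)) (k : ℕ) :
    u (k + 1) = ‖(T ^ (k + 1)) (u 0)‖⁻¹ • (T ^ (k + 1)) (u 0) := by
  induction k with
  | zero => rw [hrec, pow_one]
  | succ k ih =>
    rw [hrec, ih, inv_norm_smul_apply_inv_norm_smul, pow_succ' T (k + 1),
      mul_apply_eq_comp]

theorem norm_sub_inner_smul_sq {e : E} (he : ‖e‖ = 1) (x : E) :
    ‖x - ⟪e, x⟫ • e‖ ^ 2 = ‖x‖ ^ 2 - ⟪e, x⟫ ^ 2 := by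
  rw [norm_sub_sq_real, real_inner_smul_right, real_inner_comm, norm_smul, he,
    Real.norm_eq_abs, mul_one, sq_abs]
  ring

theorem norm_inv_norm_smul_sub_sign_smul_sq_le {e : E} (he : ‖e‖ = 1) {x : E}
    (ha : ⟪e, x⟫ ≠ 0) :
    ‖‖x‖⁻¹ • x - Real.sign ⟪e, x⟫ • e‖ ^ 2 ≤ ‖x - ⟪e, x⟫ • e‖ ^ 2 / ⟪e, x⟫ ^ 2 := by
  set a := ⟪e, x⟫
  have hta : 0 < |a| := abs_pos.mpr ha
  have hta_le : |a| ≤ ‖x‖ := by simpa [he] using abs_real_inner_le_norm e x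
  have hN : 0 < ‖x‖ := hta.trans_le hta_le
  have hs : |Real.sign a| = 1 := by
    rcases Real.sign_apply_eq_of_ne_zero a ha with h | h <;> simp [h]
  have hlhs : ‖‖x‖⁻¹ • x - Real.sign a • e‖ ^ 2 = 2 - 2 * |a| / ‖x‖ := by
    rw [norm_sub_sq_real, real_inner_smul_left, real_inner_smul_right, real_inner_comm,
      norm_smul, norm_smul, Real.norm_eq_abs, Real.norm_eq_abs, hs, he,
      abs_inv, abs_norm, inv_mul_cancel₀ hN.ne', show Real.sign a * ⟪e, x⟫ = |a| from
      Real.sign_mul_self_eq_abs a]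
    field_simp
    ring
  rw [hlhs, norm_sub_inner_smul_sq he, ← sq_abs a, sub_div' hN.ne',
    div_le_div_iff₀ hN (by positivity)]
  -- `2t²N - 2t³ ≤ N³ - t²N` is `(N - t)²(N + 2t) ≥ 0`
  nlinarith [mul_nonneg (sq_nonneg (‖x‖ - |a|)) (by positivity : 0 ≤ ‖x‖ + 2 * |a|)]

end Normalize

section Eigenvector

variable {E : Type*} [NormedAddCommGroup E] [InnerProductSpace ℝ E]
  {T : E →L[ℝ] E} {e : E} {μ : ℝ}

theorem inner_apply_of_isSymmetric (hT : (T : E →ₗ[ℝ] E).IsSymmetric) (he : T e = μ • e)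
    (y : E) : ⟪e, T y⟫ = μ * ⟪e, y⟫ := by
  rw [← ContinuousLinearMap.coe_coe T, ← hT, ContinuousLinearMap.coe_coe, he,
    real_inner_smul_left]

theorem inner_pow_apply_of_isSymmetric (hT : (T : E →ₗ[ℝ] E).IsSymmetric) (he : T e = μ • e)
    (k : ℕ) (y : E) : ⟪e, (T ^ k) y⟫ = μ ^ k * ⟪e, y⟫ := by
  induction k generalizing y with
  | zero => simp
  | succ k ih =>
    rw [pow_succ, mul_apply_eq_comp, ih, inner_apply_of_isSymmetric hT he, pow_succ, mul_assoc]

theorem pow_apply_of_apply_eq_smul (he : T e = μ • e) (k : ℕ) : (T ^ k) e = μ ^ k • e := by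
  induction k with
  | zero => simp
  | succ k ih => rw [pow_succ', mul_apply_eq_comp, ih, map_smul, he, smul_smul, pow_succ]

theorem pow_apply_sub_inner_smul (hT : (T : E →ₗ[ℝ] E).IsSymmetric) (he : T e = μ • e)
    (k : ℕ) (x : E) : (T ^ k) x - ⟪e, (T ^ k) x⟫ • e = (T ^ k) (x - ⟪e, x⟫ • e) := by
  rw [map_sub, map_smul, pow_apply_of_apply_eq_smul he, smul_smul,
    inner_pow_apply_of_isSymmetric hT he, mul_comm]

theorem norm_pow_apply_sq_le (hT : (T : E →ₗ[ℝ] E).IsSymmetric) (he : T e = μ • e) {M : ℝ}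
    (hM : ∀ y, ⟪e, y⟫ = 0 → ‖T y‖ ^ 2 ≤ M ^ 2 * ‖y‖ ^ 2) (k : ℕ) {y : E} (hy : ⟪e, y⟫ = 0) :
    ‖(T ^ k) y‖ ^ 2 ≤ (M ^ 2) ^ k * ‖y‖ ^ 2 := by
  induction k with
  | zero => simp
  | succ k ih =>
    have hTky : ⟪e, (T ^ k) y⟫ = 0 := by rw [inner_pow_apply_of_isSymmetric hT he, hy, mul_zero]
    calc ‖(T ^ (k + 1)) y‖ ^ 2 = ‖T ((T ^ k) y)‖ ^ 2 := by rw [pow_succ' T k, mul_apply_eq_comp]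
      _ ≤ M ^ 2 * ‖(T ^ k) y‖ ^ 2 := hM _ hTky
      _ ≤ M ^ 2 * ((M ^ 2) ^ k * ‖y‖ ^ 2) := by gcongr
      _ = (M ^ 2) ^ (k + 1) * ‖y‖ ^ 2 := by ring

end Eigenvector

section HilbertBasis

variable {ι E : Type*} [NormedAddCommGroup E] [InnerProductSpace ℝ E] (b : HilbertBasis ι ℝ E)

theorem HilbertBasis.hasSum_inner_sq (x : E) : HasSum (fun i => ⟪b i, x⟫ ^ 2) (‖x‖ ^ 2) := by
  simpa [← real_inner_self_eq_norm_sq, real_inner_comm x, sq] using b.hasSum_inner_mul_inner x x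

variable {T : E →L[ℝ] E} {lam : ι → ℝ} {i₀ : ι} {M : ℝ}

theorem HilbertBasis.norm_apply_sq_le_of_apply_eq_smul (hT : (T : E →ₗ[ℝ] E).IsSymmetric)
    (heig : ∀ i, T (b i) = lam i • b i) (hM : ∀ i, i ≠ i₀ → |lam i| ≤ M) {y : E}
    (hy : ⟪b i₀, y⟫ = 0) : ‖T y‖ ^ 2 ≤ M ^ 2 * ‖y‖ ^ 2 := by
  refine hasSum_le (fun i => ?_) (b.hasSum_inner_sq (T y)) ((b.hasSum_inner_sq y).mul_left _)
  rw [inner_apply_of_isSymmetric hT (heig i), mul_pow]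
  rcases eq_or_ne i i₀ with rfl | hi
  · simp [hy]
  · exact mul_le_mul_of_nonneg_right (sq_le_sq' (by linarith [neg_abs_le (lam i), hM i hi])
      ((le_abs_self _).trans (hM i hi))) (sq_nonneg _)

theorem HilbertBasis.norm_pow_apply_sub_inner_smul_sq_le (hT : (T : E →ₗ[ℝ] E).IsSymmetric)
    (heig : ∀ i, T (b i) = lam i • b i) (hM : ∀ i, i ≠ i₀ → |lam i| ≤ M) (k : ℕ) (x : E) :
    ‖(T ^ k) x - ⟪b i₀, (T ^ k) x⟫ • b i₀‖ ^ 2 ≤ (M ^ 2) ^ k * ‖x‖ ^ 2 := by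
  have hunit := b.orthonormal.1 i₀
  have hperp : ⟪b i₀, x - ⟪b i₀, x⟫ • b i₀⟫ = 0 := by
    rw [inner_sub_right, real_inner_smul_right, real_inner_self_eq_norm_sq, hunit, one_pow,
      mul_one, sub_self]
  rw [pow_apply_sub_inner_smul hT (heig i₀)]
  refine (norm_pow_apply_sq_le hT (heig i₀)
    (fun y hy => b.norm_apply_sq_le_of_apply_eq_smul hT heig hM hy) k hperp).trans
    (mul_le_mul_of_nonneg_left ?_ (by positivity))
  rw [norm_sub_inner_smul_sq hunit]
  exact sub_le_self _ (sq_nonneg _)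

theorem HilbertBasis.power_method_norm_sub_sq_le (hT : (T : E →ₗ[ℝ] E).IsSymmetric)
    (heig : ∀ i, T (b i) = lam i • b i) (hpos : 0 < lam i₀) (hM : ∀ i, i ≠ i₀ → |lam i| ≤ M)
    {u : ℕ → E} (hrec : ∀ k, u (k + 1) = ‖T (u k)‖⁻¹ • T (u k)) (hc : ⟪b i₀, u 0⟫ ≠ 0)
    (k : ℕ) :
    ‖u (k + 1) - Real.sign ⟪b i₀, u 0⟫ • b i₀‖ ^ 2
      ≤ ((M / lam i₀) ^ 2) ^ (k + 1) * ‖u 0‖ ^ 2 / ⟪b i₀, u 0⟫ ^ 2 := by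
  set c := ⟪b i₀, u 0⟫
  set x := (T ^ (k + 1)) (u 0)
  have hx : ⟪b i₀, x⟫ = lam i₀ ^ (k + 1) * c := inner_pow_apply_of_isSymmetric hT (heig i₀) _ _
  rw [power_method_succ_eq T hrec]
  calc ‖‖x‖⁻¹ • x - Real.sign c • b i₀‖ ^ 2
      = ‖‖x‖⁻¹ • x - Real.sign ⟪b i₀, x⟫ • b i₀‖ ^ 2 := by
        rw [hx, Real.sign_mul_of_pos (pow_pos hpos _)]
    _ ≤ ‖x - ⟪b i₀, x⟫ • b i₀‖ ^ 2 / ⟪b i₀, x⟫ ^ 2 :=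
        norm_inv_norm_smul_sub_sign_smul_sq_le (b.orthonormal.1 i₀)
          (hx ▸ mul_ne_zero (pow_ne_zero _ hpos.ne') hc)
    _ ≤ (M ^ 2) ^ (k + 1) * ‖u 0‖ ^ 2 / ⟪b i₀, x⟫ ^ 2 := by
        gcongr
        exact b.norm_pow_apply_sub_inner_smul_sq_le hT heig hM _ _
    _ = ((M / lam i₀) ^ 2) ^ (k + 1) * ‖u 0‖ ^ 2 / c ^ 2 := by
        rw [hx, div_pow, div_pow, mul_pow, ← pow_mul, ← pow_mul, ← pow_mul]
        field_simp
        ring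

end HilbertBasis

theorem stmt7_general
    (T : Lp ℝ 2 (volume : Measure ℝ) →L[ℝ] Lp ℝ 2 (volume : Measure ℝ))
    (hTsa : ∀ x y : Lp ℝ 2 (volume : Measure ℝ), ⟪T x, y⟫ = ⟪x, T y⟫)
    (lam : ℕ → ℝ) (v : ℕ → Lp ℝ 2 (volume : Measure ℝ))
    (horth : Orthonormal ℝ v)
    (hspan : (Submodule.span ℝ (Set.range v)).topologicalClosure = ⊤)
    (heig : ∀ k, T (v k) = lam k • v k)
    (htoppos : 0 < lam 0)
    (γ : ℝ)
    (hgap : ∀ k : ℕ, k ≠ 0 → γ * lam 0 ≤ lam 0 - |lam k|)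
    (u₀ : Lp ℝ 2 (volume : Measure ℝ)) (η : ℝ) (hη : 0 < η)
    (hcorr : η ≤ |⟪v 0, u₀⟫|)
    (u : ℕ → Lp ℝ 2 (volume : Measure ℝ)) (hu0 : u 0 = u₀)
    (hurec : ∀ k, u (k + 1) = ‖T (u k)‖⁻¹ • T (u k)) :
    ∀ k : ℕ, 1 ≤ k →
      ‖u k - Real.sign ⟪v 0, u₀⟫ • v 0‖ ^ 2
        ≤ 2 * (1 - γ) ^ (2 * k) * ‖u₀‖ ^ 2 / η ^ 2 := by
  intro k hk
  obtain ⟨j, rfl⟩ := Nat.exists_eq_add_of_le' hk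
  obtain ⟨b, rfl⟩ : ∃ b : HilbertBasis ℕ ℝ _, ⇑b = v :=
    ⟨_, HilbertBasis.coe_mk horth hspan.ge⟩
  subst hu0
  have hM : ∀ i, i ≠ 0 → |lam i| ≤ (1 - γ) * lam 0 := fun i hi => by linarith [hgap i hi]
  have hratio : (1 - γ) * lam 0 / lam 0 = 1 - γ := mul_div_cancel_right₀ _ htoppos.ne'
  have hq : 0 ≤ (1 - γ) ^ (2 * (j + 1)) * ‖u 0‖ ^ 2 := by rw [pow_mul]; positivity
  have hηc : η ^ 2 ≤ ⟪b 0, u 0⟫ ^ 2 := by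
    rw [← sq_abs ⟪b 0, u 0⟫]
    exact pow_le_pow_left₀ hη.le hcorr 2
  calc ‖u (j + 1) - Real.sign ⟪b 0, u 0⟫ • b 0‖ ^ 2
      ≤ (1 - γ) ^ (2 * (j + 1)) * ‖u 0‖ ^ 2 / ⟪b 0, u 0⟫ ^ 2 := by
        simpa only [hratio, ← pow_mul] using b.power_method_norm_sub_sq_le hTsa heig htoppos hM
          hurec (abs_pos.mp (hη.trans_le hcorr)) j
    _ ≤ (1 - γ) ^ (2 * (j + 1)) * ‖u 0‖ ^ 2 / η ^ 2 :=
        div_le_div_of_nonneg_left hq (by positivity) hηc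
    _ ≤ 2 * (1 - γ) ^ (2 * (j + 1)) * ‖u 0‖ ^ 2 / η ^ 2 := by
        rw [mul_assoc 2, mul_div_assoc 2]
        exact le_mul_of_one_le_left (div_nonneg hq (sq_nonneg η)) one_le_two

/-- Power method convergence on `L²(ℝ)`: let `T` be a nonzero compact
self-adjoint operator with eigenvalues `(λ_k)` and orthonormal eigenbasis
`(v_k)`, with top eigenvalue `λ₀ = ‖T‖ > 0` and spectral gap
`λ₀ - |λ_k| ≥ γλ₀` for `k ≠ 0` (`0 < γ ≤ 1`).  If `|⟨v₀, u₀⟩| ≥ η > 0`, the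
power iterates `u_{k+1} = T u_k / ‖T u_k‖` satisfy
`‖u_k - sign(⟨v₀,u₀⟩)·v₀‖² ≤ 2(1-γ)^{2k}·‖u₀‖²/η²`. -/
theorem stmt7
    (T : Lp ℝ 2 (volume : Measure ℝ) →L[ℝ] Lp ℝ 2 (volume : Measure ℝ))
    (hTcpt : IsCompactOperator T)
    (hTsa : ∀ x y : Lp ℝ 2 (volume : Measure ℝ), ⟪T x, y⟫ = ⟪x, T y⟫)
    (lam : ℕ → ℝ) (v : ℕ → Lp ℝ 2 (volume : Measure ℝ))
    (horth : Orthonormal ℝ v)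
    (hspan : (Submodule.span ℝ (Set.range v)).topologicalClosure = ⊤)
    (heig : ∀ k, T (v k) = lam k • v k)
    (htop : ‖T‖ = lam 0) (htoppos : 0 < lam 0)
    (γ : ℝ) (hγ0 : 0 < γ) (hγ1 : γ ≤ 1)
    (hgap : ∀ k : ℕ, k ≠ 0 → γ * lam 0 ≤ lam 0 - |lam k|)
    (u₀ : Lp ℝ 2 (volume : Measure ℝ)) (η : ℝ) (hη : 0 < η)
    (hcorr : η ≤ |⟪v 0, u₀⟫|)
    (u : ℕ → Lp ℝ 2 (volume : Measure ℝ)) (hu0 : u 0 = u₀)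
    (hurec : ∀ k, u (k + 1) = ‖T (u k)‖⁻¹ • T (u k)) :
    ∀ k : ℕ, 1 ≤ k →
      ‖u k - Real.sign ⟪v 0, u₀⟫ • v 0‖ ^ 2
        ≤ 2 * (1 - γ) ^ (2 * k) * ‖u₀‖ ^ 2 / η ^ 2 :=
  stmt7_general T hTsa lam v horth hspan heig htoppos γ hgap u₀ η hη hcorr u hu0 hurec
end
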